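/- arXiv:2604.12557 — 5 statements merged into one kernel-verified Lean document; each statement's English description precedes it below -/
import Mathlib

section
/- The number of gap-free partitions of n (partitions in which every positive integer less than the largest part occurs as a part) equals the number of partitions of n into distinct parts; equivalently, the generating function for gap-free partitions is (-q;q)_∞. -/
/-!
Conjugation `π ↦ πᵀ`, whose `j`-th part is the number of parts of `π` that are `≥ j`, is an
involution on partitions of `n`. Consecutive parts `j, j + 1` of `πᵀ` differ by the multiplicity
of `j` in `π`, so `π` has no missing integers exactly when the parts of `πᵀ` are distinct.

For the generating function, expand `∏ (1 + q ^ (k + 1))` as a sum over finite sets of `k`;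
that sum converges absolutely for `‖q‖ < 1` since `∏ (1 + |q| ^ (k + 1)) ≤ exp ∑ |q| ^ (k + 1)`,
and grouping the sets by `∑ (k + 1)` counts partitions of `n` into distinct parts.
-/

/-- The number of missing integers of a partition: positive integers less than
the largest part which do not occur as a part. -/
def missingCount {n : ℕ} (π : n.Partition) : ℕ :=
  ((Finset.Ico 1 π.parts.sup).filter (fun j => j ∉ π.parts)).card

/-- `Pcount n m` is the number of partitions of `n` with exactly `m` missing integers. -/
def Pcount (n m : ℕ) : ℕ := Fintype.card {π : n.Partition // missingCount π = m}

open Finset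

namespace Multiset

def countGE (i : ℕ) (s : Multiset ℕ) : ℕ := s.countP (i ≤ ·)

theorem countGE_anti {i j : ℕ} (hij : i ≤ j) (s : Multiset ℕ) : countGE j s ≤ countGE i s := by
  simpa only [countGE, countP_eq_card_filter] using
    card_le_card (monotone_filter_right s fun _ h => hij.trans h)

theorem countGE_eq_count_add (i : ℕ) (s : Multiset ℕ) :
    countGE i s = count i s + countGE (i + 1) s := by
  induction s using Multiset.induction with
  | empty => rfl
  | cons a s ih =>
    simp only [countGE, countP_cons, count_cons] at ih ⊢
    split_ifs <;> omega

theorem le_sup_of_countGE_pos {i : ℕ} {s : Multiset ℕ} (h : 0 < countGE i s) : i ≤ s.sup := by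
  obtain ⟨a, ha, hia⟩ := countP_pos.1 h
  exact hia.trans (le_sup ha)

theorem countGE_pos_of_le_sup {i : ℕ} {s : Multiset ℕ} (hi : 1 ≤ i) (his : i ≤ s.sup) :
    0 < countGE i s := by
  refine countP_pos.2 (not_forall_not.1 fun h => ?_)
  have : s.sup ≤ i - 1 :=
    Multiset.sup_le.2 fun a ha => Nat.le_sub_one_of_lt (not_le.1 fun hia => h a ⟨ha, hia⟩)
  omega

theorem sum_countGE_Icc {N : ℕ} {s : Multiset ℕ} (hs : ∀ a ∈ s, a ≤ N) :
    ∑ j ∈ Finset.Icc 1 N, countGE j s = s.sum := by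
  induction s using Multiset.induction with
  | empty => simp [countGE]
  | cons a s ih =>
    have ha : ∑ j ∈ Finset.Icc 1 N, (if j ≤ a then 1 else 0) = a := by
      have hfilter : {j ∈ Finset.Icc 1 N | j ≤ a} = Finset.Icc 1 a := by
        ext j
        simp only [Finset.mem_filter, Finset.mem_Icc]
        have := hs a (mem_cons_self a s)
        omega
      rw [Finset.sum_boole, hfilter, Nat.cast_id, Nat.card_Icc, Nat.add_sub_cancel]
    simp only [countGE, countP_cons] at ih ⊢
    rw [Finset.sum_add_distrib, ih fun b hb => hs b (mem_cons_of_mem hb), ha, sum_cons, add_comm]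

def transpose (s : Multiset ℕ) : Multiset ℕ := (Finset.Icc 1 s.sup).val.map (countGE · s)

theorem sum_transpose (s : Multiset ℕ) : s.transpose.sum = s.sum :=
  sum_countGE_Icc fun _ => le_sup

theorem pos_of_mem_transpose {s : Multiset ℕ} {x : ℕ} (hx : x ∈ s.transpose) : 0 < x := by
  obtain ⟨j, hj, rfl⟩ := mem_map.1 hx
  rw [Finset.mem_val, Finset.mem_Icc] at hj
  exact countGE_pos_of_le_sup hj.1 hj.2

/-- The cell `(v, j)` lies in the Young diagram of `s` iff `(j, v)` lies in that of its
transpose. -/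
theorem le_countGE_transpose_iff {v j : ℕ} (hv : 1 ≤ v) (hj : 1 ≤ j) (s : Multiset ℕ) :
    v ≤ countGE j s.transpose ↔ j ≤ countGE v s := by
  have hcount : countGE j s.transpose = #{i ∈ Finset.Icc 1 s.sup | j ≤ countGE i s} := by
    rw [countGE, transpose, countP_map]
    rfl
  rw [hcount]
  constructor
  · intro h
    by_contra! hlt
    have hsub : {i ∈ Finset.Icc 1 s.sup | j ≤ countGE i s} ⊆ Finset.Ico 1 v := fun i hi => by
      rw [Finset.mem_filter, Finset.mem_Icc] at hi
      rw [Finset.mem_Ico]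
      refine ⟨hi.1.1, lt_of_not_ge fun hvi => ?_⟩
      have := countGE_anti hvi s
      omega
    have := Finset.card_le_card hsub
    rw [Nat.card_Ico] at this
    omega
  · intro h
    have hvs : v ≤ s.sup := le_sup_of_countGE_pos (by omega)
    have hsub : Finset.Icc 1 v ⊆ {i ∈ Finset.Icc 1 s.sup | j ≤ countGE i s} := fun i hi => by
      rw [Finset.mem_Icc] at hi
      rw [Finset.mem_filter, Finset.mem_Icc]
      exact ⟨⟨hi.1, hi.2.trans hvs⟩, h.trans (countGE_anti hi.2 s)⟩
    simpa using Finset.card_le_card hsub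

theorem countGE_transpose_transpose {v : ℕ} (hv : 1 ≤ v) (s : Multiset ℕ) :
    countGE v s.transpose.transpose = countGE v s := by
  refine eq_of_forall_lt_iff fun j => ?_
  rw [← Nat.add_one_le_iff, ← Nat.add_one_le_iff, le_countGE_transpose_iff (by omega) hv,
    le_countGE_transpose_iff hv (by omega)]

theorem transpose_transpose {s : Multiset ℕ} (hs : ∀ a ∈ s, 0 < a) :
    s.transpose.transpose = s := by
  ext v
  rcases v.eq_zero_or_pos with rfl | hv
  · rw [count_eq_zero.2 fun h => (pos_of_mem_transpose h).false,
      count_eq_zero.2 fun h => (hs 0 h).false]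
  · have hsT := countGE_eq_count_add v s.transpose.transpose
    rw [countGE_transpose_transpose hv, countGE_transpose_transpose (by omega)] at hsT
    have hs := countGE_eq_count_add v s
    omega

def GapFree (s : Multiset ℕ) : Prop := ∀ j ∈ Finset.Ico 1 s.sup, j ∈ s

theorem nodup_transpose_iff {s : Multiset ℕ} : s.transpose.Nodup ↔ s.GapFree := by
  have hstep : ∀ j, countGE (j + 1) s < countGE j s ↔ j ∈ s := fun j => by
    rw [countGE_eq_count_add j s, ← count_pos]
    omega
  rw [transpose, nodup_map_iff_inj_on (Finset.nodup _)]
  constructor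
  · intro hinj j hj
    rw [Finset.mem_Ico] at hj
    refine (hstep j).1 (lt_of_le_of_ne (countGE_anti j.le_succ s) fun h => ?_)
    have := hinj (j + 1) (by simp only [Finset.mem_val, Finset.mem_Icc]; omega) j
      (by simp only [Finset.mem_val, Finset.mem_Icc]; omega) h
    omega
  · intro hgap x hx y hy hxy
    have hanti : StrictAntiOn (countGE · s) (Set.Icc 1 s.sup) :=
      strictAntiOn_of_add_one_lt Set.ordConnected_Icc fun j _ hj hj1 =>
        (hstep j).2 (hgap j (by simp only [Set.mem_Icc, Finset.mem_Ico] at hj hj1 ⊢; omega))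
    exact hanti.injOn (by simpa using hx) (by simpa using hy) hxy

theorem map_sub_one_add_one {s : Multiset ℕ} (hs : ∀ a ∈ s, 0 < a) :
    (s.map (· - 1)).map (· + 1) = s := by
  rw [map_map]
  exact (map_congr rfl fun a ha => Nat.sub_add_cancel (hs a ha)).trans (map_id s)

end Multiset

namespace Nat.Partition

def transpose {n : ℕ} (π : n.Partition) : n.Partition where
  parts := π.parts.transpose
  parts_pos := Multiset.pos_of_mem_transpose
  parts_sum := by rw [Multiset.sum_transpose, π.parts_sum]

theorem transpose_involutive (n : ℕ) : Function.Involutive (transpose (n := n)) := fun π =>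
  Nat.Partition.ext (Multiset.transpose_transpose fun _ => π.parts_pos)

theorem missingCount_eq_zero_iff {n : ℕ} (π : n.Partition) :
    missingCount π = 0 ↔ π.parts.GapFree := by
  simp [missingCount, Multiset.GapFree, Finset.filter_eq_empty_iff]

def gapFreeEquivNodup (n : ℕ) :
    {π : n.Partition // missingCount π = 0} ≃ {π : n.Partition // π.parts.Nodup} :=
  (transpose_involutive n).toPerm.subtypeEquiv fun π => by
    rw [missingCount_eq_zero_iff, ← Multiset.nodup_transpose_iff]
    rfl

theorem card_gapFree_eq_card_distincts (n : ℕ) :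
    Fintype.card {π : n.Partition // missingCount π = 0} = (distincts n).card := by
  rw [Fintype.card_congr (gapFreeEquivNodup n), distincts, Fintype.card_subtype]

/-- A partition into distinct parts `k₁ + 1, …, kᵣ + 1` is the finite set `{k₁, …, kᵣ}`. -/
def nodupEquivFinset (n : ℕ) :
    {π : n.Partition // π.parts.Nodup} ≃ ((fun s : Finset ℕ => ∑ k ∈ s, (k + 1)) ⁻¹' {n}) where
  toFun π := ⟨⟨π.1.parts.map (· - 1), π.2.map_on fun a ha b hb hab => by
      have := π.1.parts_pos ha; have := π.1.parts_pos hb; omega⟩,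
    (congrArg Multiset.sum (Multiset.map_sub_one_add_one fun _ => π.1.parts_pos)).trans
      π.1.parts_sum⟩
  invFun s := ⟨⟨s.1.val.map (· + 1), by simp, s.2⟩, s.1.nodup.map (add_left_injective 1)⟩
  left_inv π :=
    Subtype.ext (Nat.Partition.ext (Multiset.map_sub_one_add_one fun _ => π.1.parts_pos))
  right_inv s := Subtype.ext (Finset.val_injective (by simp [Multiset.map_map]))

end Nat.Partition

theorem Real.summable_prod_of_summable_of_nonneg {ι : Type*} {f : ι → ℝ} (hf0 : ∀ i, 0 ≤ f i)
    (hf : Summable f) : Summable (∏ i ∈ ·, f i) := by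
  classical
  refine summable_of_sum_le (c := exp (∑' i, f i)) (fun s => prod_nonneg fun i _ => hf0 i)
    fun F => ?_
  calc ∑ s ∈ F, ∏ i ∈ s, f i
      ≤ ∑ s ∈ (F.sup id).powerset, ∏ i ∈ s, f i :=
        sum_le_sum_of_subset_of_nonneg (fun s hs => mem_powerset.2 (le_sup (f := id) hs))
          fun s _ _ => prod_nonneg fun i _ => hf0 i
    _ = ∏ i ∈ F.sup id, (1 + f i) := (prod_one_add _).symm
    _ ≤ exp (∑ i ∈ F.sup id, f i) := prod_one_add_le_exp_sum _ hf0
    _ ≤ exp (∑' i, f i) := exp_le_exp.2 (hf.sum_le_tsum _ fun i _ => hf0 i)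

theorem summable_prod_of_summable_norm {ι R : Type*} [NormedCommRing R] [NormOneClass R]
    [CompleteSpace R] {f : ι → R} (hf : Summable (‖f ·‖)) : Summable (∏ i ∈ ·, f i) :=
  (Real.summable_prod_of_summable_of_nonneg (fun _ => norm_nonneg _) hf).of_norm_bounded
    fun s => norm_prod_le s f

theorem hasSum_pow_sum_add_one {R : Type*} [NormedCommRing R] [NormOneClass R] [CompleteSpace R]
    {q : R} (hq : ‖q‖ < 1) :
    HasSum (fun s : Finset ℕ => q ^ ∑ k ∈ s, (k + 1)) (∏' k : ℕ, (1 + q ^ (k + 1))) := by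
  have hnorm : Summable fun k : ℕ => ‖q ^ (k + 1)‖ :=
    ((summable_geometric_of_lt_one (norm_nonneg q) hq).comp_injective
      (add_left_injective 1)).of_nonneg_of_le (fun _ => norm_nonneg _) fun k => norm_pow_le q _
  have hsum := summable_prod_of_summable_norm hnorm
  rw [tprod_one_add hsum]
  simpa only [prod_pow_eq_pow_sum] using hsum.hasSum

theorem tsum_pow_eq_tsum_card_preimage_mul {α R : Type*} [NormedRing R] [CompleteSpace R] {q : R}
    {w : α → ℕ} (h : Summable fun a => q ^ w a) :
    ∑' a, q ^ w a = ∑' n, (Nat.card (w ⁻¹' {n}) : R) * q ^ n := by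
  refine (h.hasSum.tsum_fiberwise w).tsum_eq.symm.trans (tsum_congr fun n => ?_)
  have hfiber (a : w ⁻¹' {n}) : q ^ w a = q ^ n := by rw [Set.mem_preimage.1 a.2]
  rw [tsum_congr hfiber, tsum_const, nsmul_eq_mul]

theorem statement1 :
    (∀ n : ℕ, Fintype.card {π : n.Partition // missingCount π = 0} =
        (Nat.Partition.distincts n).card) ∧
    (∀ q : ℂ, ‖q‖ < 1 →
      ∑' n : ℕ, (Fintype.card {π : n.Partition // missingCount π = 0} : ℂ) * q ^ n =
        ∏' k : ℕ, (1 + q ^ (k + 1))) := by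
  refine ⟨Nat.Partition.card_gapFree_eq_card_distincts, fun q hq => ?_⟩
  have hcard (n : ℕ) : Fintype.card {π : n.Partition // missingCount π = 0} =
      Nat.card ((fun s : Finset ℕ => ∑ k ∈ s, (k + 1)) ⁻¹' {n}) := by
    rw [← Nat.card_eq_fintype_card]
    exact Nat.card_congr
      ((Nat.Partition.gapFreeEquivNodup n).trans (Nat.Partition.nodupEquivFinset n))
  have hprod := hasSum_pow_sum_add_one hq
  simp_rw [hcard, ← tsum_pow_eq_tsum_card_preimage_mul hprod.summable, hprod.tsum_eq]
end

section
/- The number of partitions of n with exactly one missing integer equals the number of partitions of n in which exactly one part appears exactly twice and all other parts appear exactly once. -/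
theorem Finset.sum_eq_one_iff {ι : Type*} {s : Finset ι} {g : ι → ℕ} :
    ∑ i ∈ s, g i = 1 ↔ (s.filter (g · = 1)).card = 1 ∧ ∀ i ∈ s, g i ≤ 1 := by
  have sum_eq_card (hle : ∀ i ∈ s, g i ≤ 1) : ∑ i ∈ s, g i = (s.filter (g · = 1)).card := by
    rw [Finset.card_filter]
    exact Finset.sum_congr rfl fun i hi => by have := hle i hi; split_ifs <;> omega
  refine ⟨fun h => ?_, fun ⟨hcard, hle⟩ => (sum_eq_card hle).trans hcard⟩
  have hle : ∀ i ∈ s, g i ≤ 1 := fun i hi =>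
    (Finset.single_le_sum (f := g) (fun _ _ => Nat.zero_le _) hi).trans h.le
  exact ⟨(sum_eq_card hle).symm.trans h, hle⟩

theorem Antitone.eq_of_map_range_eq {f g : ℕ → ℕ} (hf : Antitone f) (hg : Antitone g) {L : ℕ}
    (h : (Finset.range L).val.map f = (Finset.range L).val.map g) {j : ℕ} (hj : j < L) :
    f j = g j := by
  have sorted {f : ℕ → ℕ} (hf : Antitone f) : ((List.range L).map f).SortedGE :=
    List.sortedGE_iff_pairwise.2 <| List.pairwise_map.2 <|
      List.pairwise_lt_range.imp fun hij => hf hij.le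
  rw [Finset.range_val, ← Multiset.coe_range, Multiset.map_coe, Multiset.map_coe,
    Multiset.coe_eq_coe] at h
  exact List.map_inj_left.1 (h.eq_of_sortedGE (sorted hf) (sorted hg)) j (List.mem_range.2 hj)

namespace Multiset

theorem sup_mem_of_ne_zero {α : Type*} [LinearOrder α] [OrderBot α] {s : Multiset α}
    (hs : s ≠ 0) : s.sup ∈ s := by
  induction s using Multiset.induction_on with
  | empty => exact absurd rfl hs
  | cons a t ih =>
    rw [sup_cons]
    rcases eq_or_ne t 0 with rfl | ht
    · simp
    rcases le_total a t.sup with h | h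
    · rw [sup_eq_right.2 h]; exact mem_cons_of_mem (ih ht)
    · rw [sup_eq_left.2 h]; exact mem_cons_self a t

-- the length of column `j` (counted from `0`) of the Ferrers diagram of `s`
def colLen (s : Multiset ℕ) (j : ℕ) : ℕ := s.countP (j < ·)

theorem colLen_antitone (s : Multiset ℕ) : Antitone (colLen s) := fun j k hjk => by
  simp only [colLen, countP_eq_card_filter]
  exact card_le_card (monotone_filter_right s fun x hx => hjk.trans_lt hx)

theorem colLen_cons (a : ℕ) (s : Multiset ℕ) (j : ℕ) :
    colLen (a ::ₘ s) j = colLen s j + if j < a then 1 else 0 :=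
  countP_cons _ _ _

theorem colLen_pred_eq_add_count (s : Multiset ℕ) {v : ℕ} (hv : 0 < v) :
    colLen s (v - 1) = colLen s v + s.count v := by
  induction s using Multiset.induction_on with
  | empty => simp [colLen]
  | cons a t ih =>
    rw [colLen_cons, colLen_cons, count_cons]
    split_ifs <;> omega

theorem colLen_eq_zero_of_sup_le {s : Multiset ℕ} {j : ℕ} (h : s.sup ≤ j) : colLen s j = 0 :=
  countP_eq_zero.2 fun _ hp => not_lt.2 ((le_sup hp).trans h)

theorem colLen_pos_of_lt_sup {s : Multiset ℕ} {j : ℕ} (h : j < s.sup) : 0 < colLen s j :=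
  countP_pos_of_mem (sup_mem_of_ne_zero (by rintro rfl; simp at h)) h

theorem sum_range_colLen {s : Multiset ℕ} {L : ℕ} (h : ∀ p ∈ s, p ≤ L) :
    ∑ j ∈ Finset.range L, colLen s j = s.sum := by
  induction s using Multiset.induction_on with
  | empty => simp [colLen]
  | cons a t ih =>
    have hfilter : (Finset.range L).filter (· < a) = Finset.range a := by
      ext x; simp only [Finset.mem_filter, Finset.mem_range]
      have := h a (mem_cons_self a t); omega
    simp only [colLen_cons, Finset.sum_add_distrib, Finset.sum_boole, hfilter,
      ih fun p hp => h p (mem_cons_of_mem hp), sum_cons]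
    simp [add_comm]

def conjugate (s : Multiset ℕ) : Multiset ℕ := (Finset.range s.sup).val.map (colLen s)

theorem card_conjugate (s : Multiset ℕ) : card (conjugate s) = s.sup := by
  simp [conjugate]

theorem sum_conjugate (s : Multiset ℕ) : (conjugate s).sum = s.sum :=
  sum_range_colLen fun _ => le_sup

theorem pos_of_mem_conjugate {s : Multiset ℕ} {x : ℕ} (hx : x ∈ conjugate s) : 0 < x := by
  obtain ⟨j, hj, rfl⟩ := mem_map.1 hx
  exact colLen_pos_of_lt_sup (Finset.mem_range.1 hj)

theorem colLen_pred_lt_of_mem {s : Multiset ℕ} {v w : ℕ} (hv : v ∈ s) (hv0 : 0 < v)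
    (hvw : v < w) : colLen s (w - 1) < colLen s (v - 1) := by
  rw [colLen_pred_eq_add_count s hv0]
  have := colLen_antitone s (show v ≤ w - 1 by omega)
  have := count_pos.2 hv
  omega

theorem toFinset_conjugate {s : Multiset ℕ} (hpos : ∀ p ∈ s, 0 < p) :
    (conjugate s).toFinset = s.toFinset.image fun v => colLen s (v - 1) := by
  ext x
  simp only [conjugate, toFinset_map, Finset.val_toFinset, Finset.mem_image, Finset.mem_range,
    mem_toFinset]
  constructor
  · rintro ⟨j, hj, rfl⟩
    have hex : ∃ p, p ∈ s ∧ j < p := ⟨s.sup, sup_mem_of_ne_zero (by rintro rfl; simp at hj), hj⟩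
    obtain ⟨hp, hjp⟩ := Nat.find_spec hex
    -- no part lies in `(j, Nat.find hex - 1]`, as `Nat.find hex` is the least part exceeding `j`
    refine ⟨Nat.find hex, hp, countP_congr rfl fun q hq => ?_⟩
    refine propext ⟨fun hq' => by omega, fun hjq => ?_⟩
    have := Nat.find_min' hex ⟨hq, hjq⟩
    omega
  · rintro ⟨v, hv, rfl⟩
    exact ⟨v - 1, by have := hpos v hv; have := le_sup hv; omega, rfl⟩

theorem card_toFinset_conjugate {s : Multiset ℕ} (hpos : ∀ p ∈ s, 0 < p) :
    (conjugate s).toFinset.card = s.toFinset.card := by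
  rw [toFinset_conjugate hpos]
  refine Finset.card_image_of_injOn (StrictAntiOn.injOn fun v hv w hw hvw => ?_)
  rw [Finset.mem_coe, mem_toFinset] at hv
  exact colLen_pred_lt_of_mem hv (hpos v hv) hvw

theorem eq_of_colLen_eq {s t : Multiset ℕ} (hs : ∀ p ∈ s, 0 < p) (ht : ∀ p ∈ t, 0 < p)
    (h : colLen s = colLen t) : s = t := by
  ext v
  rcases Nat.eq_zero_or_pos v with rfl | hv
  · rw [count_eq_zero.2 fun h0 => (hs 0 h0).false, count_eq_zero.2 fun h0 => (ht 0 h0).false]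
  · have hs' := colLen_pred_eq_add_count s hv
    rw [h, colLen_pred_eq_add_count t hv] at hs'
    omega

theorem conjugate_injOn : Set.InjOn conjugate {s | ∀ p ∈ s, 0 < p} := by
  intro s hs t ht h
  have hsup : s.sup = t.sup := by rw [← card_conjugate s, h, card_conjugate]
  refine eq_of_colLen_eq hs ht (funext fun j => ?_)
  rcases lt_or_ge j s.sup with hj | hj
  · rw [conjugate, conjugate, ← hsup] at h
    exact (colLen_antitone s).eq_of_map_range_eq (colLen_antitone t) h hj
  · rw [colLen_eq_zero_of_sup_le hj, colLen_eq_zero_of_sup_le (hsup ▸ hj)]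

theorem toFinset_subset_Icc_sup {s : Multiset ℕ} (hpos : ∀ p ∈ s, 0 < p) :
    s.toFinset ⊆ Finset.Icc 1 s.sup := fun p hp => by
  rw [mem_toFinset] at hp
  exact Finset.mem_Icc.2 ⟨hpos p hp, le_sup hp⟩

theorem card_filter_notMem_Ico_sup {s : Multiset ℕ} (hpos : ∀ p ∈ s, 0 < p) :
    ((Finset.Ico 1 s.sup).filter (· ∉ s)).card = s.sup - s.toFinset.card := by
  have hfilter : (Finset.Ico 1 s.sup).filter (· ∉ s) = Finset.Icc 1 s.sup \ s.toFinset := by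
    ext j
    simp only [Finset.mem_filter, Finset.mem_Ico, Finset.mem_sdiff, Finset.mem_Icc, mem_toFinset]
    refine ⟨fun ⟨⟨h1, h2⟩, h3⟩ => ⟨⟨h1, h2.le⟩, h3⟩, fun ⟨⟨h1, h2⟩, h3⟩ => ⟨⟨h1, ?_⟩, h3⟩⟩
    refine h2.lt_of_ne fun hj => h3 (hj ▸ sup_mem_of_ne_zero ?_)
    rintro rfl
    rw [sup_zero, Nat.bot_eq_zero] at h2
    omega
  rw [hfilter, Finset.card_sdiff_of_subset (toFinset_subset_Icc_sup hpos), Nat.card_Icc,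
    Nat.add_sub_cancel]

theorem card_eq_card_toFinset_add_one_iff {α : Type*} [DecidableEq α] (t : Multiset α) :
    card t = t.toFinset.card + 1 ↔
      (t.toFinset.filter (fun a => t.count a = 2)).card = 1 ∧
        ∀ a ∈ t.toFinset, t.count a = 1 ∨ t.count a = 2 := by
  have hpos : ∀ a ∈ t.toFinset, 1 ≤ t.count a := fun a ha => count_pos.2 (mem_toFinset.1 ha)
  have hexcess : ∑ a ∈ t.toFinset, (t.count a - 1) = card t - t.toFinset.card := by
    rw [Finset.sum_tsub_distrib _ hpos, toFinset_sum_count_eq, Finset.card_eq_sum_ones]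
  have hle := toFinset_card_le t
  rw [show card t = t.toFinset.card + 1 ↔ ∑ a ∈ t.toFinset, (t.count a - 1) = 1 by omega,
    Finset.sum_eq_one_iff]
  refine and_congr ?_ (forall₂_congr fun a ha => by have := hpos a ha; omega)
  rw [Finset.filter_congr (q := fun a => t.count a = 2) fun a ha => by
    have := hpos a ha; omega]

end Multiset

namespace Nat.Partition

def conj {n : ℕ} (π : n.Partition) : n.Partition where
  parts := π.parts.conjugate
  parts_pos := Multiset.pos_of_mem_conjugate
  parts_sum := by rw [Multiset.sum_conjugate, π.parts_sum]

theorem conj_bijective (n : ℕ) : Function.Bijective (conj (n := n)) :=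
  Finite.injective_iff_bijective.1 fun π σ h => Nat.Partition.ext <|
    Multiset.conjugate_injOn (fun _ => π.parts_pos) (fun _ => σ.parts_pos) (congrArg parts h)

end Nat.Partition

theorem missingCount_eq_one_iff {n : ℕ} (π : n.Partition) :
    missingCount π = 1 ↔ π.parts.sup = π.parts.toFinset.card + 1 := by
  have hpos : ∀ p ∈ π.parts, 0 < p := fun _ => π.parts_pos
  have hmissing := Multiset.card_filter_notMem_Ico_sup hpos
  have hle := Finset.card_le_card (Multiset.toFinset_subset_Icc_sup hpos)
  rw [Nat.card_Icc] at hle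
  unfold missingCount
  omega

theorem statement2 (n : ℕ) :
    Pcount n 1 = Fintype.card {π : n.Partition //
      (π.parts.toFinset.filter (fun a => π.parts.count a = 2)).card = 1 ∧
      ∀ a ∈ π.parts.toFinset, π.parts.count a = 1 ∨ π.parts.count a = 2} := by
  refine Fintype.card_congr <|
    (Equiv.ofBijective _ (Nat.Partition.conj_bijective n)).subtypeEquiv fun π => ?_
  rw [Equiv.ofBijective_apply, missingCount_eq_one_iff,
    ← Multiset.card_eq_card_toFinset_add_one_iff]
  simp only [Nat.Partition.conj, Multiset.card_conjugate,
    Multiset.card_toFinset_conjugate fun _ => π.parts_pos]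
end

section
/- The coefficients of the formal power series (-2q;q)_∞ (q;q^2)_∞ are congruent modulo 3 to the coefficients of ∑_{n∈ℤ} (-1)^n q^{n^2}; in particular, the coefficient of q^n is ≡ 0 (mod 3) unless n is a square, ≡ 1 (mod 3) if n is an odd square (n ≥ 1), and ≡ 2 (mod 3) if n is an even square. -/
/-!
Modulo 3 we have `1 + 2q^k ≡ 1 - q^k`, so the product is congruent to
`(q;q)_∞ (q;q²)_∞ = (q;q²)_∞² (q²;q²)_∞`, and Gauss's identity (Jacobi's triple product at
`z = -1`) identifies this with `∑_{m ∈ ℤ} (-1)^m q^{m²}`.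

The coefficient of `q^n` only involves the truncations at `n`. There
`(q;q)_n (q;q²)_n ≡ (q;q²)_n² (q²;q²)_n` modulo `q^{n+1}`, and the finite triple product
`(q;q²)_n² = ∑_j (-1)^{j-n} [2n, j]_{q²} q^{(j-n)²}`, proved from Rothe's `q`-binomial theorem by
induction, reduces the claim to `[2n, j]_{q²} (q²;q²)_n ≡ 1` modulo `q^{n+1-(j-n)²}`. This last
congruence holds because `[a+b, a]_q (q;q)_a = (q^{b+1};q)_a`.
-/

/-- The coefficient of `q^n` in the formal power series `(-2q;q)_∞ (q;q²)_∞`.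
Since the factors `(1 + 2q^k)` for `k > n` and `(1 - q^(2k-1))` for `2k-1 > n` do not
affect the coefficient of `q^n`, it equals the coefficient in the truncated product. -/
noncomputable def coeffProd (n : ℕ) : ℤ :=
  PowerSeries.coeff (R := ℤ) n
    ((∏ k ∈ Finset.range n, (1 + 2 * PowerSeries.X ^ (k + 1))) *
      ∏ k ∈ Finset.range n, (1 - PowerSeries.X ^ (2 * k + 1)))

open Finset
open scoped PowerSeries

section QBinom

variable {R : Type*}

def qBinom [Semiring R] (q : R) : ℕ → ℕ → R
  | _, 0 => 1
  | 0, _ + 1 => 0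
  | n + 1, k + 1 => qBinom q n k + q ^ (k + 1) * qBinom q n (k + 1)

section Semiring

variable [Semiring R]

@[simp] lemma qBinom_zero_right (q : R) (n : ℕ) : qBinom q n 0 = 1 := by
  cases n <;> rfl

lemma qBinom_succ_succ (q : R) (n k : ℕ) :
    qBinom q (n + 1) (k + 1) = qBinom q n k + q ^ (k + 1) * qBinom q n (k + 1) := rfl

lemma qBinom_eq_zero_of_lt (q : R) {n k : ℕ} (h : n < k) : qBinom q n k = 0 := by
  induction n generalizing k with
  | zero => obtain ⟨k, rfl⟩ := Nat.exists_eq_add_of_lt h; rfl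
  | succ n ih =>
    obtain ⟨k, rfl⟩ := Nat.exists_eq_add_of_lt (Nat.zero_lt_of_lt h)
    rw [qBinom_succ_succ, ih (by omega), ih (by omega), mul_zero, add_zero]

@[simp] lemma qBinom_self (q : R) (n : ℕ) : qBinom q n n = 1 := by
  induction n with
  | zero => rfl
  | succ n ih =>
    rw [qBinom_succ_succ, ih, qBinom_eq_zero_of_lt q n.lt_succ_self, mul_zero, add_zero]

end Semiring

lemma sum_mul_qBinom_succ [CommSemiring R] (q : R) (g : ℕ → R) (n : ℕ) :
    ∑ j ∈ range (n + 2), g j * qBinom q (n + 1) j =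
      ∑ j ∈ range (n + 1), (g (j + 1) + g j * q ^ j) * qBinom q n j := by
  have hshift : ∑ j ∈ range (n + 1), g j * q ^ j * qBinom q n j =
      ∑ j ∈ range (n + 1), g (j + 1) * (q ^ (j + 1) * qBinom q n (j + 1)) + g 0 := by
    rw [sum_range_succ', sum_range_succ _ n, qBinom_eq_zero_of_lt q n.lt_succ_self]
    simp [mul_assoc]
  rw [sum_range_succ', qBinom_zero_right]
  simp only [qBinom_succ_succ, mul_add, add_mul, sum_add_distrib]
  rw [hshift]
  ring

variable [CommRing R]

lemma qBinom_add_mul_prod_range_left (q : R) (a b : ℕ) :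
    qBinom q (a + b) a * ∏ k ∈ range a, (1 - q ^ (k + 1)) =
      ∏ k ∈ range a, (1 - q ^ (b + k + 1)) := by
  induction a generalizing b with
  | zero => simp
  | succ a iha =>
    induction b with
    | zero => simp
    | succ b ihb =>
      have h1 := iha (b + 1)
      have hP := prod_range_succ (fun k ↦ 1 - q ^ (k + 1)) a
      rw [prod_range_succ' (fun k ↦ 1 - q ^ (b + k + 1))] at ihb
      rw [show a + 1 + (b + 1) = a + (b + 1) + 1 by omega, qBinom_succ_succ,
        prod_range_succ (fun k ↦ 1 - q ^ (b + 1 + k + 1))]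
      rw [show a + (b + 1) = a + 1 + b by omega] at h1 ⊢
      have e : ∀ k, b + (k + 1) + 1 = b + 1 + k + 1 := fun k ↦ by omega
      simp only [e, add_zero] at ihb
      linear_combination (1 - q ^ (a + 1)) * h1 + q ^ (a + 1) * ihb + qBinom q (a + 1 + b) a * hP

lemma qBinom_add_mul_prod_range_right (q : R) (a b : ℕ) :
    qBinom q (a + b) a * ∏ k ∈ range b, (1 - q ^ (k + 1)) =
      ∏ k ∈ range b, (1 - q ^ (a + k + 1)) := by
  induction a generalizing b with
  | zero => simp
  | succ a iha =>
    induction b with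
    | zero => simp
    | succ b ihb =>
      have h1 := iha (b + 1)
      rw [prod_range_succ, prod_range_succ'] at h1
      rw [show a + 1 + (b + 1) = a + (b + 1) + 1 by omega, qBinom_succ_succ, prod_range_succ,
        prod_range_succ]
      rw [show a + (b + 1) = a + 1 + b by omega] at h1 ⊢
      have e : ∀ k, a + (k + 1) + 1 = a + 1 + k + 1 := fun k ↦ by omega
      simp only [e, add_zero] at h1
      linear_combination h1 + q ^ (a + 1) * (1 - q ^ (b + 1)) * ihb

lemma two_mul_choose_two_add_self (j : ℕ) : 2 * j.choose 2 + j = j ^ 2 := by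
  induction j with
  | zero => simp
  | succ j ih => rw [Nat.choose_succ_succ', Nat.choose_one_right]; linear_combination ih

/-- Rothe's `q`-binomial theorem. -/
theorem prod_one_sub_mul_pow_eq_sum (q z : R) (n : ℕ) :
    ∏ k ∈ range n, (1 - z * q ^ k) =
      ∑ j ∈ range (n + 1), (-1) ^ j * q ^ j.choose 2 * z ^ j * qBinom q n j := by
  induction n generalizing z with
  | zero => simp
  | succ n ih =>
    have hshift : ∏ k ∈ range n, (1 - z * q ^ (k + 1)) = ∏ k ∈ range n, (1 - z * q * q ^ k) :=
      prod_congr rfl fun k _ ↦ by ring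
    rw [prod_range_succ', hshift, ih, sum_mul_qBinom_succ, sum_mul]
    refine sum_congr rfl fun j _ ↦ ?_
    rw [Nat.choose_succ_succ', Nat.choose_one_right]
    ring

/-- A finite form of Jacobi's triple product identity; the summation index of
`∑_{m ∈ ℤ} (-1)^m q^{m²}` is `m = j - b`. -/
theorem prod_one_sub_pow_odd_mul_prod_eq_sum (x : R) (a b : ℕ) :
    (∏ k ∈ range a, (1 - x ^ (2 * k + 1))) * ∏ k ∈ range b, (1 - x ^ (2 * k + 1)) =
      ∑ j ∈ range (a + b + 1),
        (-1) ^ (j + b) * x ^ (((j : ℤ) - b).natAbs ^ 2) * qBinom (x ^ 2) (a + b) j := by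
  induction b with
  | zero =>
    have hodd : ∏ k ∈ range a, (1 - x ^ (2 * k + 1)) = ∏ k ∈ range a, (1 - x * (x ^ 2) ^ k) :=
      prod_congr rfl fun k _ ↦ by ring
    rw [prod_range_zero, mul_one, hodd, prod_one_sub_mul_pow_eq_sum]
    refine sum_congr rfl fun j _ ↦ ?_
    simp only [add_zero, Nat.cast_zero, sub_zero, Int.natAbs_natCast]
    rw [← two_mul_choose_two_add_self]
    ring
  | succ b ih =>
    rw [prod_range_succ, ← mul_assoc, ih, show a + (b + 1) + 1 = a + b + 2 by omega,
      show a + (b + 1) = a + b + 1 by omega, sum_mul_qBinom_succ, sum_mul]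
    refine sum_congr rfl fun j _ ↦ ?_
    have hshift : (((j + 1 : ℕ) : ℤ) - (b + 1 : ℕ)).natAbs = ((j : ℤ) - b).natAbs := by omega
    have hexp : ((j : ℤ) - (b + 1 : ℕ)).natAbs ^ 2 + 2 * j =
        ((j : ℤ) - b).natAbs ^ 2 + (2 * b + 1) := by
      zify; rw [sq_abs, sq_abs]; ring
    have hpow : x ^ (((j : ℤ) - (b + 1 : ℕ)).natAbs ^ 2) * (x ^ 2) ^ j =
        x ^ (((j : ℤ) - b).natAbs ^ 2) * x ^ (2 * b + 1) := by
      rw [← pow_mul, ← pow_add, ← pow_add, hexp]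
    rw [hshift]
    linear_combination (-1) ^ (j + b) * qBinom (x ^ 2) (a + b) j * hpow

lemma prod_one_sub_pow_sModEq_one {ι : Type*} (q : R) (s : Finset ι) (f : ι → ℕ) {N : ℕ}
    (h : ∀ i ∈ s, N ≤ f i) : ∏ i ∈ s, (1 - q ^ f i) ≡ 1 [SMOD Ideal.span {q ^ N}] := by
  have hfactor : ∀ i ∈ s, 1 - q ^ f i ≡ 1 [SMOD Ideal.span {q ^ N}] := fun i hi ↦ by
    rw [SModEq.sub_mem, sub_sub_cancel_left, neg_mem_iff, Ideal.mem_span_singleton]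
    exact pow_dvd_pow q (h i hi)
  simpa using SModEq.prod hfactor

lemma qBinom_add_mul_prod_sModEq_one (q : R) {a b m : ℕ} (hm : min a b ≤ m) :
    qBinom q (a + b) a * ∏ k ∈ range m, (1 - q ^ (k + 1)) ≡ 1
      [SMOD Ideal.span {q ^ (min a b + 1)}] := by
  rcases le_total a b with hab | hba
  · obtain ⟨c, rfl⟩ := Nat.exists_eq_add_of_le (min_eq_left hab ▸ hm)
    rw [prod_range_add, ← mul_assoc, qBinom_add_mul_prod_range_left]
    have := (prod_one_sub_pow_sModEq_one q (range a) (fun k ↦ b + k + 1) (N := min a b + 1)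
      fun k _ ↦ by omega).mul
      (prod_one_sub_pow_sModEq_one q (range c) (fun k ↦ a + k + 1) fun k _ ↦ by omega)
    rwa [mul_one] at this
  · obtain ⟨c, rfl⟩ := Nat.exists_eq_add_of_le (min_eq_right hba ▸ hm)
    rw [prod_range_add, ← mul_assoc, qBinom_add_mul_prod_range_right]
    have := (prod_one_sub_pow_sModEq_one q (range b) (fun k ↦ a + k + 1) (N := min a b + 1)
      fun k _ ↦ by omega).mul
      (prod_one_sub_pow_sModEq_one q (range c) (fun k ↦ b + k + 1) fun k _ ↦ by omega)
    rwa [mul_one] at this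

lemma prod_range_two_mul {M : Type*} [CommMonoid M] (f : ℕ → M) (n : ℕ) :
    ∏ k ∈ range (2 * n), f k = (∏ k ∈ range n, f (2 * k)) * ∏ k ∈ range n, f (2 * k + 1) := by
  induction n with
  | zero => simp
  | succ n ih =>
    rw [show 2 * (n + 1) = 2 * n + 1 + 1 by ring, prod_range_succ, prod_range_succ, ih,
      prod_range_succ, prod_range_succ]
    ac_rfl

lemma prod_one_sub_pow_mul_prod_odd_sModEq (x : R) (n : ℕ) :
    (∏ k ∈ range n, (1 - x ^ (k + 1))) * ∏ k ∈ range n, (1 - x ^ (2 * k + 1)) ≡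
      (∏ k ∈ range n, (1 - x ^ (2 * k + 1))) ^ 2 * ∏ k ∈ range n, (1 - (x ^ 2) ^ (k + 1))
      [SMOD Ideal.span {x ^ (n + 1)}] := by
  have hsplit : (∏ k ∈ range n, (1 - x ^ (2 * k + 1))) * ∏ k ∈ range n, (1 - (x ^ 2) ^ (k + 1)) =
      (∏ k ∈ range n, (1 - x ^ (k + 1))) * ∏ k ∈ range n, (1 - x ^ (n + k + 1)) := by
    rw [← prod_range_add, ← two_mul, prod_range_two_mul]
    congr 1
    exact prod_congr rfl fun k _ ↦ by ring
  have htail := prod_one_sub_pow_sModEq_one x (range n) (fun k ↦ n + k + 1) (N := n + 1)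
    fun k _ ↦ by omega
  calc (∏ k ∈ range n, (1 - x ^ (k + 1))) * ∏ k ∈ range n, (1 - x ^ (2 * k + 1))
      = (∏ k ∈ range n, (1 - x ^ (k + 1))) * (∏ k ∈ range n, (1 - x ^ (2 * k + 1))) * 1 := by
        rw [mul_one]
    _ ≡ (∏ k ∈ range n, (1 - x ^ (k + 1))) * (∏ k ∈ range n, (1 - x ^ (2 * k + 1))) *
          ∏ k ∈ range n, (1 - x ^ (n + k + 1)) [SMOD Ideal.span {x ^ (n + 1)}] :=
        SModEq.rfl.mul htail.symm
    _ = _ := by rw [sq, mul_assoc (∏ k ∈ range n, (1 - x ^ (2 * k + 1))), hsplit]; ring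

end QBinom

section Theta

/-- The coefficient of `q ^ n` in `∑_{m ∈ ℤ} (-1) ^ m q ^ (m ^ 2)`. -/
def thetaCoeff (R : Type*) [Ring R] (n : ℕ) : R :=
  ∑ r ∈ range (n + 1), if n = r * r then (if r = 0 then 1 else 2 * (-1) ^ r) else 0

variable {R : Type*} [Ring R]

lemma thetaCoeff_eq_zero_of_not_isSquare {n : ℕ} (hn : ¬IsSquare n) : thetaCoeff R n = 0 :=
  sum_eq_zero fun r _ ↦ if_neg fun h ↦ hn ⟨r, h⟩

lemma thetaCoeff_mul_self {r : ℕ} (hr : r ≠ 0) : thetaCoeff R (r * r) = 2 * (-1) ^ r := by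
  rw [thetaCoeff, sum_eq_single_of_mem r (mem_range.mpr (Nat.lt_succ_of_le (Nat.le_mul_self r))),
    if_pos rfl, if_neg hr]
  exact fun s _ hs ↦ if_neg fun h ↦ hs (Nat.mul_self_inj.mp h.symm)

lemma neg_one_pow_add_eq_neg_one_pow_natAbs_sub (j n : ℕ) :
    (-1 : R) ^ (j + n) = (-1) ^ ((j : ℤ) - n).natAbs :=
  neg_one_pow_congr (by simp [Nat.even_add, Int.natAbs_even, Int.even_sub, parity_simps])

lemma sum_range_two_mul_add_one_natAbs_sub {M : Type*} [AddCommMonoid M] (φ : ℕ → M) (n : ℕ) :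
    ∑ j ∈ range (2 * n + 1), φ ((j : ℤ) - n).natAbs = φ 0 + ∑ r ∈ range n, 2 • φ (r + 1) := by
  induction n with
  | zero => simp
  | succ n ih =>
    have hmid : ∀ i : ℕ, (((i + 1 : ℕ) : ℤ) - ((n + 1 : ℕ) : ℤ)).natAbs = ((i : ℤ) - n).natAbs :=
      fun i ↦ by omega
    rw [show 2 * (n + 1) + 1 = 2 * n + 1 + 1 + 1 by omega, sum_range_succ, sum_range_succ',
      sum_range_succ _ n]
    simp only [hmid, ih]
    rw [show (((2 * n + 1 : ℕ) : ℤ) - n).natAbs = n + 1 by omega,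
      show (((0 : ℕ) : ℤ) - ((n + 1 : ℕ) : ℤ)).natAbs = n + 1 by omega, two_nsmul]
    abel

lemma thetaCoeff_eq_sum_natAbs_sub (n : ℕ) :
    ∑ j ∈ range (2 * n + 1), (-1 : R) ^ ((j : ℤ) - n).natAbs *
      (if n = ((j : ℤ) - n).natAbs ^ 2 then 1 else 0) = thetaCoeff R n := by
  rw [sum_range_two_mul_add_one_natAbs_sub (fun r ↦ (-1 : R) ^ r * if n = r ^ 2 then 1 else 0),
    thetaCoeff, sum_range_succ', add_comm]
  congr 1
  · simp [sq]
  · simp [eq_comm]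

end Theta

namespace PowerSeries

variable {R : Type*} [CommRing R]

lemma coeff_eq_of_sModEq {p p' : R⟦X⟧} {N m : ℕ} (h : p ≡ p' [SMOD Ideal.span {X ^ N}])
    (hm : m < N) : coeff m p = coeff m p' := by
  rw [SModEq.sub_mem, Ideal.mem_span_singleton, X_pow_dvd_iff] at h
  simpa [sub_eq_zero] using h m hm

lemma coeff_mul_X_pow_of_sModEq_one {p : R⟦X⟧} {n e : ℕ}
    (h : p ≡ 1 [SMOD Ideal.span {X ^ (n + 1 - e)}]) :
    coeff n (p * X ^ e) = if n = e then 1 else 0 := by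
  rw [coeff_mul_X_pow']
  by_cases he : e ≤ n
  · rw [if_pos he, coeff_eq_of_sModEq h (by omega), coeff_one]
    exact if_congr (by omega) rfl rfl
  · rw [if_neg he, if_neg (by omega)]

lemma coeff_qBinom_mul_prod_mul_X_pow {n j : ℕ} (hj : j ≤ 2 * n) :
    coeff n (qBinom (X ^ 2 : R⟦X⟧) (2 * n) j * (∏ k ∈ range n, (1 - (X ^ 2) ^ (k + 1))) *
      X ^ (((j : ℤ) - n).natAbs ^ 2)) = if n = ((j : ℤ) - n).natAbs ^ 2 then 1 else 0 := by
  obtain ⟨b, hb⟩ : ∃ b, 2 * n = j + b := ⟨2 * n - j, by omega⟩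
  rw [hb]
  apply coeff_mul_X_pow_of_sModEq_one
  refine SModEq.mono ?_ (qBinom_add_mul_prod_sModEq_one (X ^ 2) (m := n) (by omega))
  rw [Ideal.span_singleton_le_span_singleton, ← pow_mul]
  exact pow_dvd_pow X (by have := Nat.le_self_pow two_ne_zero ((j : ℤ) - n).natAbs; omega)

theorem coeff_prod_one_sub_X_pow_mul_prod_eq_thetaCoeff (n : ℕ) :
    coeff n ((∏ k ∈ range n, (1 - X ^ (k + 1))) * ∏ k ∈ range n, (1 - X ^ (2 * k + 1)) : R⟦X⟧) =
      thetaCoeff R n := by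
  rw [coeff_eq_of_sModEq (prod_one_sub_pow_mul_prod_odd_sModEq (X : R⟦X⟧) n) n.lt_succ_self, sq,
    prod_one_sub_pow_odd_mul_prod_eq_sum, ← two_mul, sum_mul, map_sum,
    ← thetaCoeff_eq_sum_natAbs_sub]
  refine sum_congr rfl fun j hj ↦ ?_
  rw [← neg_one_pow_add_eq_neg_one_pow_natAbs_sub, ← coeff_qBinom_mul_prod_mul_X_pow (R := R)
    (by rw [mem_range] at hj; omega), ← coeff_C_mul]
  congr 1
  simp only [map_pow, map_neg, map_one]
  ring

end PowerSeries

lemma coeffProd_emod_three (n : ℕ) : coeffProd n % 3 = thetaCoeff ℤ n % 3 := by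
  have hmap : PowerSeries.map (Int.castRingHom (ZMod 3))
      ((∏ k ∈ range n, (1 + 2 * PowerSeries.X ^ (k + 1))) *
        ∏ k ∈ range n, (1 - PowerSeries.X ^ (2 * k + 1))) =
      PowerSeries.map (Int.castRingHom (ZMod 3))
      ((∏ k ∈ range n, (1 - PowerSeries.X ^ (k + 1))) *
        ∏ k ∈ range n, (1 - PowerSeries.X ^ (2 * k + 1))) := by
    simp only [map_mul, map_prod, map_add, map_sub, map_one, map_pow, PowerSeries.map_X, map_ofNat]
    congr 1
    refine prod_congr rfl fun k _ ↦ ?_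
    have h3 : (3 : (ZMod 3)⟦X⟧) = 0 := by
      rw [← map_ofNat PowerSeries.C 3]
      exact (map_eq_zero_iff _ PowerSeries.C_injective).mpr rfl
    linear_combination PowerSeries.X ^ (k + 1) * h3
  refine (ZMod.intCast_eq_intCast_iff' _ _ 3).mp ?_
  rw [coeffProd, ← PowerSeries.coeff_prod_one_sub_X_pow_mul_prod_eq_thetaCoeff,
    ← eq_intCast (Int.castRingHom (ZMod 3)), ← eq_intCast (Int.castRingHom (ZMod 3)),
    ← PowerSeries.coeff_map, ← PowerSeries.coeff_map, hmap]

theorem statement6 (n : ℕ) :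
    coeffProd n % 3 =
      (∑ r ∈ Finset.range (n + 1),
        if n = r * r then (if r = 0 then (1 : ℤ) else 2 * (-1) ^ r) else 0) % 3 ∧
    (¬ IsSquare n → coeffProd n % 3 = 0) ∧
    (1 ≤ n → IsSquare n → Odd n → coeffProd n % 3 = 1) ∧
    (1 ≤ n → IsSquare n → Even n → coeffProd n % 3 = 2) := by
  refine ⟨coeffProd_emod_three n, fun hn ↦ ?_, ?_, ?_⟩
  · rw [coeffProd_emod_three, thetaCoeff_eq_zero_of_not_isSquare hn]
    rfl
  · rintro hn ⟨r, rfl⟩ hodd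
    rw [coeffProd_emod_three, thetaCoeff_mul_self (by rintro rfl; simp at hn),
      (Nat.odd_mul.mp hodd).1.neg_one_pow]
    rfl
  · rintro hn ⟨r, rfl⟩ heven
    rw [coeffProd_emod_three, thetaCoeff_mul_self (by rintro rfl; simp at hn),
      ((Nat.even_mul.mp heven).elim id id).neg_one_pow]
    rfl
end

section
/- The total number of missing integers over all partitions of n equals the total number of parts greater than 1 (counted with multiplicity) over all partitions of n. -/
open Multiset Finset

namespace Stmt8Aux

/-- membership of sup -/
lemma sup_mem (s : Multiset ℕ) (hs : s ≠ 0) : s.sup ∈ s := by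
  have h1 : s.toFinset.Nonempty := by
    rw [Multiset.toFinset_nonempty]; exact hs
  obtain ⟨b, hb, hb2⟩ := Finset.exists_mem_eq_sup s.toFinset h1 id
  have : s.toFinset.sup id = s.sup := by
    rw [Finset.sup_def]
    simp [Multiset.sup_dedup]
  rw [← this, hb2]
  simpa using hb

lemma mem_le_sup {s : Multiset ℕ} {a : ℕ} (h : a ∈ s) : a ≤ s.sup :=
  Multiset.le_sup h

/-- A down-closed finset of naturals is an initial segment. -/
lemma downclosed_eq_range (S : Finset ℕ) (h : ∀ a b : ℕ, a ≤ b → b ∈ S → a ∈ S) :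
    S = Finset.range S.card := by
  ext x
  simp only [Finset.mem_range]
  constructor
  · intro hx
    have hsub : Finset.range (x + 1) ⊆ S := by
      intro y hy
      exact h y x (by simpa using Nat.lt_succ_iff.mp (Finset.mem_range.mp hy)) hx
    have := Finset.card_le_card hsub
    simpa using this
  · intro hx
    by_contra hxS
    have hsub : S ⊆ Finset.range x := by
      intro y hy
      simp only [Finset.mem_range]
      by_contra hyx
      exact hxS (h x y (le_of_not_gt hyx) hy)
    have := Finset.card_le_card hsub
    simp only [Finset.card_range] at this
    omega

section conj

variable {n : ℕ}

/-- The profile function of a partition: number of parts exceeding `j`. -/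
def A (π : n.Partition) (j : ℕ) : ℕ := (π.parts.filter (fun i => j < i)).card

lemma A_antitone (π : n.Partition) : Antitone (A π) := by
  intro j k hjk
  exact Multiset.card_le_card (Multiset.monotone_filter_right _ (fun i hi => lt_of_le_of_lt hjk hi))

lemma A_zero (π : n.Partition) : A π 0 = Multiset.card π.parts := by
  unfold A
  rw [Multiset.filter_eq_self.mpr]
  intro a ha; exact π.parts_pos ha

lemma A_le_card (π : n.Partition) (j : ℕ) : A π j ≤ Multiset.card π.parts :=
  Multiset.card_le_card (Multiset.filter_le _ _)

lemma A_eq_zero_of_sup_le (π : n.Partition) {j : ℕ} (h : π.parts.sup ≤ j) : A π j = 0 := by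
  unfold A
  rw [Multiset.card_eq_zero, Multiset.filter_eq_nil]
  intro a ha
  have := mem_le_sup ha
  omega

lemma sum_card_filter (N : ℕ) (s : Multiset ℕ) (h : ∀ i ∈ s, i ≤ N) :
    ∑ j ∈ Finset.range N, (s.filter (fun i => j < i)).card = s.sum := by
  induction s using Multiset.induction with
  | empty => simp
  | cons a s ih =>
    have ha : a ≤ N := h a (Multiset.mem_cons_self _ _)
    have hs : ∀ i ∈ s, i ≤ N := fun i hi => h i (Multiset.mem_cons_of_mem hi)
    have key : ∀ j, ((a ::ₘ s).filter (fun i => j < i)).card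
        = (if j < a then 1 else 0) + (s.filter (fun i => j < i)).card := by
      intro j
      rw [Multiset.filter_cons]
      split_ifs with hj <;> simp [Nat.add_comm]
    have hcount : ∑ j ∈ Finset.range N, (if j < a then 1 else 0) = a := by
      have : (Finset.range N).filter (fun j => j < a) = Finset.range a := by
        ext x
        simp only [Finset.mem_filter, Finset.mem_range]
        omega
      rw [← Finset.card_filter, this, Finset.card_range]
    simp only [key, Finset.sum_add_distrib, ih hs, Multiset.sum_cons, hcount]

lemma sum_A (π : n.Partition) : ∑ j ∈ Finset.range π.parts.sup, A π j = n := by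
  have h := sum_card_filter π.parts.sup π.parts (fun i hi => mem_le_sup hi)
  rw [π.parts_sum] at h
  exact h

/-- count in terms of A -/
lemma A_sub_one (π : n.Partition) (a : ℕ) (ha : 1 ≤ a) :
    A π (a - 1) = Multiset.count a π.parts + A π a := by
  unfold A
  generalize π.parts = s
  induction s using Multiset.induction with
  | empty => simp
  | cons b s ih =>
    simp only [Multiset.filter_cons, Multiset.count_cons, Multiset.card_add]
    split_ifs <;> simp_all <;> omega

/-- The conjugate partition. -/
def conj (π : n.Partition) : n.Partition where
  parts := (Multiset.range π.parts.sup).map (A π)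
  parts_pos := by
    intro i hi
    obtain ⟨j, hj, rfl⟩ := Multiset.mem_map.mp hi
    rw [Multiset.mem_range] at hj
    have hne : π.parts ≠ 0 := by
      intro h0
      rw [h0] at hj; simp at hj
    have hsupmem : π.parts.sup ∈ π.parts := sup_mem _ hne
    unfold A
    exact Multiset.card_pos_iff_exists_mem.mpr
      ⟨π.parts.sup, Multiset.mem_filter.mpr ⟨hsupmem, hj⟩⟩
  parts_sum := by
    have : ((Multiset.range π.parts.sup).map (A π)).sum
        = ∑ j ∈ Finset.range π.parts.sup, A π j := rfl
    rw [this, sum_A]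

lemma conj_card (π : n.Partition) : Multiset.card (conj π).parts = π.parts.sup := by
  simp [conj]

lemma conj_sup (π : n.Partition) : (conj π).parts.sup = Multiset.card π.parts := by
  by_cases h0 : π.parts = 0
  · simp [conj, h0]
  · have hN : 0 < π.parts.sup := by
      obtain ⟨a, ha⟩ := Multiset.exists_mem_of_ne_zero h0
      exact lt_of_lt_of_le (π.parts_pos ha) (mem_le_sup ha)
    apply le_antisymm
    · apply Multiset.sup_le.mpr
      intro x hx
      obtain ⟨j, hj, rfl⟩ := Multiset.mem_map.mp
        (show x ∈ (Multiset.range π.parts.sup).map (A π) from hx)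
      exact A_le_card π j
    · have hmem : A π 0 ∈ (conj π).parts :=
        Multiset.mem_map.mpr ⟨0, Multiset.mem_range.mpr hN, rfl⟩
      rw [← A_zero π]
      exact mem_le_sup hmem

/-- recovery: A from the conjugate -/
lemma A_recover (π : n.Partition) (j t : ℕ) (ht : 1 ≤ t) :
    t ≤ A π j ↔ j < Multiset.countP (fun x => t ≤ x) (conj π).parts := by
  set N := π.parts.sup with hN
  have hcount : Multiset.countP (fun x => t ≤ x) (conj π).parts
      = ((Finset.range N).filter (fun j => t ≤ A π j)).card := by
    show Multiset.countP _ ((Multiset.range N).map (A π)) = _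
    rw [Multiset.countP_map]
    rfl
  set S := (Finset.range N).filter (fun j => t ≤ A π j) with hS
  have hdown : ∀ a b : ℕ, a ≤ b → b ∈ S → a ∈ S := by
    intro a b hab hb
    rw [hS, Finset.mem_filter, Finset.mem_range] at hb ⊢
    exact ⟨lt_of_le_of_lt hab hb.1, le_trans hb.2 (A_antitone π hab)⟩
  have hrange := downclosed_eq_range S hdown
  have hjN : t ≤ A π j → j < N := by
    intro hAj
    by_contra hc
    rw [A_eq_zero_of_sup_le π (le_of_not_gt hc)] at hAj
    omega
  rw [hcount]
  constructor
  · intro hAj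
    have : j ∈ S := Finset.mem_filter.mpr ⟨Finset.mem_range.mpr (hjN hAj), hAj⟩
    rw [hrange, Finset.mem_range] at this
    exact this
  · intro hj
    have : j ∈ S := by rw [hrange, Finset.mem_range]; exact hj
    exact (Finset.mem_filter.mp this).2

lemma conj_injective : Function.Injective (conj (n := n)) := by
  intro π σ h
  have hA : ∀ j, A π j = A σ j := by
    intro j
    have key : ∀ t, 1 ≤ t → (t ≤ A π j ↔ t ≤ A σ j) := by
      intro t ht
      rw [A_recover π j t ht, A_recover σ j t ht, h]
    have h1 : A π j ≤ A σ j := by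
      rcases Nat.eq_zero_or_pos (A π j) with h' | h'
      · omega
      · exact (key _ h').mp le_rfl
    have h2 : A σ j ≤ A π j := by
      rcases Nat.eq_zero_or_pos (A σ j) with h' | h'
      · omega
      · exact (key _ h').mpr le_rfl
    omega
  apply Nat.Partition.ext
  ext a
  rcases Nat.eq_zero_or_pos a with rfl | ha
  · rw [Multiset.count_eq_zero_of_notMem, Multiset.count_eq_zero_of_notMem]
    · intro hmem; exact absurd (σ.parts_pos hmem) (lt_irrefl 0)
    · intro hmem; exact absurd (π.parts_pos hmem) (lt_irrefl 0)
  · have e1 := A_sub_one π a ha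
    have e2 := A_sub_one σ a ha
    have := hA (a - 1)
    have := hA a
    omega

end conj

section move

variable {n : ℕ}

/-- Replace one part `j` by `j` ones. -/
def moveOut (π : n.Partition) (j : ℕ) (hj : j ∈ π.parts) : n.Partition where
  parts := π.parts.erase j + Multiset.replicate j 1
  parts_pos := by
    intro i hi
    rcases Multiset.mem_add.mp hi with h | h
    · exact π.parts_pos (Multiset.mem_of_mem_erase h)
    · rw [Multiset.eq_of_mem_replicate h]; exact one_pos
  parts_sum := by
    have h1 : j + (π.parts.erase j).sum = n := by
      rw [← Multiset.sum_cons, Multiset.cons_erase hj, π.parts_sum]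
    rw [Multiset.sum_add, Multiset.sum_replicate, smul_eq_mul, mul_one]
    omega

lemma replicate_le (σ : n.Partition) (m : ℕ) (h2 : m ≤ σ.parts.count 1) :
    Multiset.replicate m 1 ≤ σ.parts := by
  rw [Multiset.le_iff_count]
  intro a
  rw [Multiset.count_replicate]
  split_ifs with h
  · subst h; exact h2
  · exact Nat.zero_le _

/-- Replace `m` ones by one part `m`. -/
def moveIn (σ : n.Partition) (m : ℕ) (h1 : 1 ≤ m) (h2 : m ≤ σ.parts.count 1) :
    n.Partition where
  parts := (σ.parts - Multiset.replicate m 1) + {m}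
  parts_pos := by
    intro i hi
    rcases Multiset.mem_add.mp hi with h | h
    · exact σ.parts_pos (Multiset.mem_of_le (Multiset.sub_le_self _ _) h)
    · rw [Multiset.mem_singleton.mp h]; exact h1
  parts_sum := by
    have hle := replicate_le σ m h2
    have hco : (σ.parts - Multiset.replicate m 1) + Multiset.replicate m 1 = σ.parts :=
      tsub_add_cancel_of_le hle
    have hs := congrArg Multiset.sum hco
    rw [Multiset.sum_add, Multiset.sum_replicate, smul_eq_mul, mul_one, σ.parts_sum] at hs
    rw [Multiset.sum_add, Multiset.sum_singleton]
    omega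

lemma moveIn_moveOut (π : n.Partition) (j : ℕ) (hj : j ∈ π.parts) (h1 : 1 ≤ j)
    (h2 : j ≤ (moveOut π j hj).parts.count 1) : moveIn (moveOut π j hj) j h1 h2 = π := by
  apply Nat.Partition.ext
  show ((π.parts.erase j + Multiset.replicate j 1) - Multiset.replicate j 1) + {j} = π.parts
  rw [add_tsub_cancel_right, add_comm, Multiset.singleton_add, Multiset.cons_erase hj]

lemma moveOut_moveIn (σ : n.Partition) (m : ℕ) (h1 : 1 ≤ m) (h2 : m ≤ σ.parts.count 1)
    (hm : m ∈ (moveIn σ m h1 h2).parts) : moveOut (moveIn σ m h1 h2) m hm = σ := by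
  apply Nat.Partition.ext
  have he : ((σ.parts - Multiset.replicate m 1) + {m}).erase m
      = σ.parts - Multiset.replicate m 1 := by
    rw [add_comm, Multiset.singleton_add, Multiset.erase_cons_head]
  simp only [moveOut, moveIn]
  rw [he, tsub_add_cancel_of_le (replicate_le σ m h2)]

lemma sum_toFinset_card_eq_sum_count_one :
    ∑ π : n.Partition, π.parts.toFinset.card = ∑ π : n.Partition, π.parts.count 1 := by
  classical
  have hL : ∑ π : n.Partition, π.parts.toFinset.card
      = ((Finset.univ : Finset n.Partition).sigma (fun π => π.parts.toFinset)).card := by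
    rw [Finset.card_sigma]
  have hR : ∑ π : n.Partition, π.parts.count 1
      = ((Finset.univ : Finset n.Partition).sigma
          (fun σ => Finset.Icc 1 (σ.parts.count 1))).card := by
    rw [Finset.card_sigma]
    refine Finset.sum_congr rfl (fun σ _ => ?_)
    rw [Nat.card_Icc]
    omega
  rw [hL, hR]
  refine Finset.card_bij' (fun a ha => ⟨moveOut a.1 a.2 ?_, a.2⟩)
    (fun b hb => ⟨moveIn b.1 b.2 ?_ ?_, b.2⟩) ?_ ?_ ?_ ?_
  · exact Multiset.mem_toFinset.mp (Finset.mem_sigma.mp ha).2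
  · exact (Finset.mem_Icc.mp (Finset.mem_sigma.mp hb).2).1
  · exact (Finset.mem_Icc.mp (Finset.mem_sigma.mp hb).2).2
  · -- i maps into t
    intro a ha
    rw [Finset.mem_sigma]
    refine ⟨Finset.mem_univ _, ?_⟩
    rw [Finset.mem_Icc]
    have hj : a.2 ∈ a.1.parts := Multiset.mem_toFinset.mp (Finset.mem_sigma.mp ha).2
    have h1 : 1 ≤ a.2 := a.1.parts_pos hj
    refine ⟨h1, ?_⟩
    show a.2 ≤ Multiset.count 1 (a.1.parts.erase a.2 + Multiset.replicate a.2 1)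
    rw [Multiset.count_add, Multiset.count_replicate, if_pos rfl]
    omega
  · -- j maps into s
    intro b hb
    rw [Finset.mem_sigma]
    refine ⟨Finset.mem_univ _, ?_⟩
    rw [Multiset.mem_toFinset]
    show b.2 ∈ (b.1.parts - Multiset.replicate b.2 1) + {b.2}
    exact Multiset.mem_add.mpr (Or.inr (Multiset.mem_singleton.mpr rfl))
  · -- left inverse
    intro a ha
    simp only [moveIn_moveOut]
  · -- right inverse
    intro b hb
    simp only [moveOut_moveIn]

end move

section perpartition

variable {n : ℕ}

lemma missing_add_distinct (π : n.Partition) :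
    missingCount π + π.parts.toFinset.card = π.parts.sup := by
  by_cases h0 : π.parts = 0
  · simp [missingCount, h0]
  · set N := π.parts.sup with hN
    have hNmem : N ∈ π.parts := sup_mem _ h0
    have hN1 : 1 ≤ N := π.parts_pos hNmem
    have hsplit : missingCount π + ((Finset.Ico 1 N).filter (fun j => j ∈ π.parts)).card
        = (Finset.Ico 1 N).card := by
      unfold missingCount
      rw [← hN]
      rw [add_comm, Finset.card_filter_add_card_filter_not]
    have hIco : (Finset.Ico 1 N).card = N - 1 := by
      rw [Nat.card_Ico]
    have hfil : (Finset.Ico 1 N).filter (fun j => j ∈ π.parts) = π.parts.toFinset.erase N := by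
      ext x
      simp only [Finset.mem_filter, Finset.mem_Ico, Finset.mem_erase, Multiset.mem_toFinset]
      constructor
      · rintro ⟨⟨-, hx2⟩, hx3⟩
        exact ⟨by omega, hx3⟩
      · rintro ⟨hx1, hx2⟩
        have := π.parts_pos hx2
        have := mem_le_sup hx2
        exact ⟨⟨by omega, by omega⟩, hx2⟩
    have hNfin : N ∈ π.parts.toFinset := Multiset.mem_toFinset.mpr hNmem
    have herase : (π.parts.toFinset.erase N).card = π.parts.toFinset.card - 1 :=
      Finset.card_erase_of_mem hNfin
    have hpos : 1 ≤ π.parts.toFinset.card := Finset.card_pos.mpr ⟨N, hNfin⟩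
    rw [hfil, herase, hIco] at hsplit
    omega

lemma filter_two_add_count_one (π : n.Partition) :
    (π.parts.filter (fun a => 2 ≤ a)).card + π.parts.count 1 = Multiset.card π.parts := by
  have h : π.parts.filter (fun a => ¬ 2 ≤ a) = π.parts.filter (fun a => a = 1) := by
    apply Multiset.filter_congr
    intro a ha
    have := π.parts_pos ha
    constructor <;> (intro h; omega)
  have hcount : π.parts.count 1 = (π.parts.filter (fun a => a = 1)).card := by
    rw [Multiset.count_eq_card_filter_eq]
    congr 1
    apply Multiset.filter_congr
    intro a _
    constructor <;> (intro h; omega)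
  rw [hcount, ← h]
  rw [← Multiset.card_add, Multiset.filter_add_not]

end perpartition

end Stmt8Aux

open Stmt8Aux

theorem statement8 (n : ℕ) :
    ∑ π : n.Partition, missingCount π =
      ∑ π : n.Partition, (π.parts.filter (fun a => 2 ≤ a)).card := by
  classical
  have e3 : ∑ π : n.Partition, π.parts.sup = ∑ π : n.Partition, Multiset.card π.parts := by
    have hbij : Function.Bijective (conj (n := n)) :=
      Finite.injective_iff_bijective.mp conj_injective
    calc ∑ π : n.Partition, π.parts.sup
        = ∑ π : n.Partition, Multiset.card (conj π).parts :=
          Finset.sum_congr rfl fun π _ => (conj_card π).symm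
      _ = ∑ π : n.Partition, Multiset.card π.parts :=
          Fintype.sum_bijective conj hbij _ _ (fun π => rfl)
  have e4 := sum_toFinset_card_eq_sum_count_one (n := n)
  have h1 : ∑ π : n.Partition, missingCount π + ∑ π : n.Partition, π.parts.toFinset.card
      = ∑ π : n.Partition, π.parts.sup := by
    rw [← Finset.sum_add_distrib]
    exact Finset.sum_congr rfl fun π _ => missing_add_distinct π
  have h2 : ∑ π : n.Partition, (π.parts.filter (fun a => 2 ≤ a)).card
        + ∑ π : n.Partition, π.parts.count 1
      = ∑ π : n.Partition, Multiset.card π.parts := by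
    rw [← Finset.sum_add_distrib]
    exact Finset.sum_congr rfl fun π _ => filter_two_add_count_one π
  omega
end

section
/- The identity of formal power series: ∑_{n≥1} n q^n / (q;q)_n = (1/(q;q)_∞) ∑_{n≥1} q^n/(1-q^n). -/
/-!
Put `E = qSeries q 1` and `G = qSeries q (↑)`, i.e. `E(z) = ∑ zⁿ/(q;q)ₙ` and
`G(z) = ∑ n zⁿ/(q;q)ₙ`. Since `(1 - qⁿ)/(q;q)ₙ = 1/(q;q)ₙ₋₁`,
shifting the index gives `E(z) - E(qz) = z E(z)` and `G(z) - G(qz) = z (G(z) + E(z))`.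
Iterating from `z = q` yields `E(q^(K+1)) = E(q) (q;q)_K` and
`G(q) = E(q) ∑_{k<K} q^(k+1)/(1 - q^(k+1)) + G(q^(K+1))/(q;q)_K`.
As `K → ∞`, continuity of `E` and `G` at `0`, where they equal `1` and `0`, gives
`E(q) = 1/(q;q)_∞` and `G(q) = E(q) ∑ qⁿ/(1 - qⁿ)`.
-/

open Finset Filter Topology Metric

namespace QSeries

variable {q : ℂ}

lemma norm_pow_succ_lt_one (hq : ‖q‖ < 1) (j : ℕ) : ‖q ^ (j + 1)‖ < 1 := by
  rw [norm_pow]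
  exact pow_lt_one₀ (norm_nonneg q) hq j.succ_ne_zero

lemma one_sub_pow_succ_ne_zero (hq : ‖q‖ < 1) (j : ℕ) : 1 - q ^ (j + 1) ≠ 0 := by
  refine sub_ne_zero.mpr fun h => ?_
  simpa [← h] using norm_pow_succ_lt_one hq j

noncomputable def qPochhammer (q : ℂ) (n : ℕ) : ℂ := ∏ j ∈ range n, (1 - q ^ (j + 1))

@[simp]
lemma qPochhammer_zero : qPochhammer q 0 = 1 := prod_range_zero _

lemma qPochhammer_succ (n : ℕ) : qPochhammer q (n + 1) = qPochhammer q n * (1 - q ^ (n + 1)) :=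
  prod_range_succ _ _

lemma qPochhammer_ne_zero (hq : ‖q‖ < 1) (n : ℕ) : qPochhammer q n ≠ 0 :=
  prod_ne_zero_iff.mpr fun j _ => one_sub_pow_succ_ne_zero hq j

lemma tprod_one_sub_pow_ne_zero (hq : ‖q‖ < 1) : ∏' j : ℕ, (1 - q ^ (j + 1)) ≠ 0 := by
  simp_rw [sub_eq_add_neg]
  refine tprod_one_add_ne_zero_of_summable (fun j => ?_) ?_
  · simpa [← sub_eq_add_neg] using one_sub_pow_succ_ne_zero hq j
  · simpa using (summable_nat_add_iff 1).mpr (summable_geometric_of_lt_one (norm_nonneg _) hq)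

lemma tendsto_qPochhammer (hq : ‖q‖ < 1) :
    Tendsto (qPochhammer q) atTop (𝓝 (∏' j : ℕ, (1 - q ^ (j + 1)))) :=
  (ModularForm.multipliable_one_sub_pow hq).hasProd.tendsto_prod_nat

lemma exists_norm_inv_qPochhammer_le (hq : ‖q‖ < 1) :
    ∃ C, ∀ n, ‖(qPochhammer q n)⁻¹‖ ≤ C := by
  obtain ⟨C, hC⟩ := isBounded_iff_forall_norm_le.mp <| isBounded_range_of_tendsto _ <|
    (tendsto_qPochhammer hq).inv₀ (tprod_one_sub_pow_ne_zero hq)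
  exact ⟨C, fun n => hC _ ⟨n, rfl⟩⟩

noncomputable def qSeries (q : ℂ) (a : ℕ → ℂ) (z : ℂ) : ℂ := ∑' n, a n * z ^ n / qPochhammer q n

lemma summable_succ_mul_geometric {r : ℝ} (h0 : 0 ≤ r) (hr : r < 1) :
    Summable fun n : ℕ => ((n : ℝ) + 1) * r ^ n := by
  simp_rw [add_mul, one_mul]
  refine .add ?_ (summable_geometric_of_lt_one h0 hr)
  simpa using summable_pow_mul_geometric_of_norm_lt_one 1 (by rwa [Real.norm_of_nonneg h0])

lemma norm_qSeries_term_le {a : ℕ → ℂ} (ha : ∀ n, ‖a n‖ ≤ n + 1) {C r : ℝ}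
    (hC : ∀ n, ‖(qPochhammer q n)⁻¹‖ ≤ C) {z : ℂ} (hz : ‖z‖ ≤ r) (n : ℕ) :
    ‖a n * z ^ n / qPochhammer q n‖ ≤ C * (((n : ℝ) + 1) * r ^ n) := by
  rw [div_eq_mul_inv, norm_mul, norm_mul, norm_pow, mul_comm]
  gcongr
  · exact (norm_nonneg _).trans (hC 0)
  · exact hC n
  · exact ha n

lemma summable_qSeries (hq : ‖q‖ < 1) {a : ℕ → ℂ} (ha : ∀ n, ‖a n‖ ≤ n + 1) {z : ℂ}
    (hz : ‖z‖ < 1) : Summable fun n => a n * z ^ n / qPochhammer q n := by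
  obtain ⟨C, hC⟩ := exists_norm_inv_qPochhammer_le hq
  exact .of_norm_bounded ((summable_succ_mul_geometric (norm_nonneg z) hz).mul_left C)
    (norm_qSeries_term_le ha hC le_rfl)

lemma continuousOn_qSeries (hq : ‖q‖ < 1) {a : ℕ → ℂ} (ha : ∀ n, ‖a n‖ ≤ n + 1) :
    ContinuousOn (qSeries q a) (ball 0 1) := by
  obtain ⟨C, hC⟩ := exists_norm_inv_qPochhammer_le hq
  intro z hz
  rw [mem_ball_zero_iff] at hz
  have hr : (‖z‖ + 1) / 2 < 1 := by linarith
  have hM : ContinuousOn (qSeries q a) (closedBall 0 ((‖z‖ + 1) / 2)) :=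
    continuousOn_tsum (fun n => by fun_prop)
      ((summable_succ_mul_geometric (by positivity) hr).mul_left C)
      (fun n w hw => norm_qSeries_term_le ha hC (mem_closedBall_zero_iff.mp hw) n)
  exact (hM.continuousAt (closedBall_mem_nhds_of_mem (by rw [mem_ball_zero_iff]; linarith)))
    |>.continuousWithinAt

lemma qSeries_zero (a : ℕ → ℂ) : qSeries q a 0 = a 0 := by
  rw [qSeries, tsum_eq_single 0 fun n hn => by simp [hn]]
  simp

lemma qSeries_sub_qSeries_mul (hq : ‖q‖ < 1) {a : ℕ → ℂ} (ha : ∀ n, ‖a n‖ ≤ n + 1) {z : ℂ}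
    (hz : ‖z‖ < 1) :
    qSeries q a z - qSeries q a (q * z) = z * qSeries q (fun n => a (n + 1)) z := by
  have hqz : ‖q * z‖ < 1 := by
    rw [norm_mul]
    nlinarith [norm_nonneg q, norm_nonneg z]
  have hs := summable_qSeries hq ha hz
  have hs' := summable_qSeries hq ha hqz
  rw [qSeries, qSeries, qSeries, ← hs.tsum_sub hs', (hs.sub hs').tsum_eq_zero_add,
    ← tsum_mul_left]
  simp only [pow_zero, mul_one, qPochhammer_zero, sub_self, zero_add]
  congr 1 with n
  have := qPochhammer_ne_zero hq n
  have := one_sub_pow_succ_ne_zero hq n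
  rw [qPochhammer_succ]
  field_simp
  ring

lemma tendsto_qSeries_pow_succ (hq : ‖q‖ < 1) {a : ℕ → ℂ} (ha : ∀ n, ‖a n‖ ≤ n + 1) :
    Tendsto (fun K => qSeries q a (q ^ (K + 1))) atTop (𝓝 (a 0)) := by
  rw [← qSeries_zero a]
  refine ((continuousOn_qSeries hq ha).continuousAt (ball_mem_nhds 0 one_pos)).tendsto.comp ?_
  exact (tendsto_pow_atTop_nhds_zero_of_norm_lt_one hq).comp (tendsto_add_atTop_nat 1)

lemma norm_one_le_succ (n : ℕ) : ‖(1 : ℕ → ℂ) n‖ ≤ n + 1 := by simp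

lemma norm_natCast_le_succ (n : ℕ) : ‖(n : ℂ)‖ ≤ n + 1 := by simp

lemma qSeries_one_pow_succ (hq : ‖q‖ < 1) (K : ℕ) :
    qSeries q 1 (q ^ (K + 1)) = qSeries q 1 q * qPochhammer q K := by
  induction K with
  | zero => simp
  | succ K ih =>
    have h := qSeries_sub_qSeries_mul hq norm_one_le_succ (norm_pow_succ_lt_one hq K)
    rw [← pow_succ'] at h
    simp only [Pi.one_apply] at h
    rw [qPochhammer_succ, ← mul_assoc, ← ih]
    linear_combination -h

lemma qSeries_natCast_sub_qSeries_natCast (hq : ‖q‖ < 1) (K : ℕ) :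
    qSeries q (↑) (q ^ (K + 1)) - qSeries q (↑) (q ^ (K + 2)) =
      q ^ (K + 1) * (qSeries q (↑) (q ^ (K + 1)) + qSeries q 1 (q ^ (K + 1))) := by
  have hz := norm_pow_succ_lt_one hq K
  have hsplit : qSeries q (fun n => ((n + 1 : ℕ) : ℂ)) (q ^ (K + 1)) =
      qSeries q (↑) (q ^ (K + 1)) + qSeries q 1 (q ^ (K + 1)) := by
    rw [qSeries, qSeries, qSeries, ← (summable_qSeries hq norm_natCast_le_succ hz).tsum_add
      (summable_qSeries hq norm_one_le_succ hz)]
    congr 1 with n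
    simp only [Nat.cast_succ, Pi.one_apply]
    ring
  rw [pow_succ' q (K + 1), qSeries_sub_qSeries_mul hq norm_natCast_le_succ hz, hsplit]

lemma qSeries_natCast_self_eq_sum_add (hq : ‖q‖ < 1) (K : ℕ) :
    qSeries q (↑) q = qSeries q 1 q * ∑ k ∈ range K, q ^ (k + 1) / (1 - q ^ (k + 1)) +
      qSeries q (↑) (q ^ (K + 1)) / qPochhammer q K := by
  induction K with
  | zero => simp
  | succ K ih =>
    have h := qSeries_natCast_sub_qSeries_natCast hq K
    rw [qSeries_one_pow_succ hq K] at h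
    have := qPochhammer_ne_zero hq K
    have := one_sub_pow_succ_ne_zero hq K
    rw [sum_range_succ, qPochhammer_succ, ih]
    field_simp
    linear_combination h

lemma qSeries_one_self (hq : ‖q‖ < 1) :
    qSeries q 1 q = (∏' j : ℕ, (1 - q ^ (j + 1)))⁻¹ := by
  refine eq_inv_of_mul_eq_one_left (tendsto_nhds_unique ((tendsto_qPochhammer hq).const_mul _) ?_)
  simpa only [qSeries_one_pow_succ hq, Pi.one_apply] using
    tendsto_qSeries_pow_succ hq norm_one_le_succ

lemma summable_pow_succ_div_one_sub_pow_succ (hq : ‖q‖ < 1) :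
    Summable fun n : ℕ => q ^ (n + 1) / (1 - q ^ (n + 1)) := by
  have := (summable_nat_add_iff 1).mpr
    (summable_norm_pow_mul_geometric_div_one_sub (𝕜 := ℂ) 0 hq)
  simpa only [pow_zero, one_mul] using this

lemma qSeries_natCast_self (hq : ‖q‖ < 1) :
    qSeries q (↑) q = qSeries q 1 q * ∑' n : ℕ, q ^ (n + 1) / (1 - q ^ (n + 1)) := by
  have hlim := ((summable_pow_succ_div_one_sub_pow_succ hq).hasSum.tendsto_sum_nat.const_mul
    (qSeries q 1 q)).add ((tendsto_qSeries_pow_succ hq norm_natCast_le_succ).mul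
      ((tendsto_qPochhammer hq).inv₀ (tprod_one_sub_pow_ne_zero hq)))
  simp only [← div_eq_mul_inv, ← qSeries_natCast_self_eq_sum_add hq, Nat.cast_zero, zero_div,
    add_zero] at hlim
  exact tendsto_nhds_unique tendsto_const_nhds hlim

end QSeries

open QSeries in
theorem statement9 (q : ℂ) (hq : ‖q‖ < 1) :
    ∑' n : ℕ, ((n : ℂ) + 1) * q ^ (n + 1) / ∏ j ∈ Finset.range (n + 1), (1 - q ^ (j + 1)) =
      (∏' j : ℕ, (1 - q ^ (j + 1)))⁻¹ * ∑' n : ℕ, q ^ (n + 1) / (1 - q ^ (n + 1)) := by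
  have hG : qSeries q (↑) q = ∑' n : ℕ, ((n : ℂ) + 1) * q ^ (n + 1) /
      ∏ j ∈ Finset.range (n + 1), (1 - q ^ (j + 1)) := by
    rw [qSeries, (summable_qSeries hq norm_natCast_le_succ hq).tsum_eq_zero_add]
    simp [qPochhammer]
  rw [← hG, qSeries_natCast_self hq, qSeries_one_self hq]
end
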